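/- Let Γ=(G,σ) be a weighted signed graph. Then λ₁(Δ^σ)/2 ≤ h₁^σ(μ_d) ≤ √(2 λ₁(Δ^σ)). -/

import Mathlib

/-!
Write `x = 1_{V₁} - 1_{V₂}`. The numerator of `β^σ(V₁,V₂)` is half the L¹ energy
`Σ_{u,v} w(u,v) |x(u) - σ(u,v) x(v)|` and its denominator is `Σ_u d(u) |x(u)|`.

Lower bound: as `|x| ≤ 1`, the quadratic energy `Σ w (x(u) - σ x(v))²` is at most twice the
L¹ energy, while the Rayleigh quotient of `√d · x` for `I - D^{-1/2} A^σ D^{-1/2}` is at least `λ₁`.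

Upper bound: take an eigenvector `√d · f` for `λ₁`, so `Σ w (f(u) - σ f(v))² = 2 λ₁ Σ d f²`, and
sweep through the threshold cuts `V₁ = {t ≤ g}`, `V₂ = {t ≤ -g}` of `g = f |f|`, `t ∈ (0, max |g|]`.
Integrating in `t` recovers the L¹ energy and the `d`-weighted L¹ norm of `g` exactly, so some
threshold has `β ≤ Σ w |g(u) - σ g(v)| / (2 Σ d |g|)`; by `|a|a| - b|b|| ≤ |a - b| (|a| + |b|)` and
Cauchy–Schwarz this is at most `√(2 λ₁)`.
-/

open Finset Real

open scoped Classical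

noncomputable section

namespace SignedGraph

variable {N : ℕ}

/-- The degree `d(u) = Σ_v w(u,v)` of a vertex. -/
def deg (w : Fin N → Fin N → ℝ) (u : Fin N) : ℝ := ∑ v, w u v

/-- Hypotheses making `(w, sgn)` a weighted signed graph: `w` is a symmetric nonnegative
weight function vanishing on the diagonal and `sgn` is a symmetric `±1`-valued signature. -/
structure IsWSG {N : ℕ} (w : Fin N → Fin N → ℝ) (sgn : Fin N → Fin N → ℝ) : Prop where
  w_symm : ∀ u v, w u v = w v u
  w_nonneg : ∀ u v, 0 ≤ w u v
  w_loopless : ∀ u, w u u = 0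
  sgn_symm : ∀ u v, sgn u v = sgn v u
  sgn_pm : ∀ u v, sgn u v = 1 ∨ sgn u v = -1

/-- The signature obtained from `sgn` by switching with the function `θ : V → {±1}`. -/
def switchSgn (sgn : Fin N → Fin N → ℝ) (θ : Fin N → ℝ) : Fin N → Fin N → ℝ :=
  fun u v => θ u * sgn u v * θ v

/-- The signed adjacency matrix `A^σ`, `A^σ_{uv} = σ(u,v) w(u,v)`. -/
def adj (w sgn : Fin N → Fin N → ℝ) : Matrix (Fin N) (Fin N) ℝ :=
  Matrix.of fun u v => sgn u v * w u v

/-- The symmetric form `I - D^{-1/2} A^σ D^{-1/2}` of the signed normalized Laplacian,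
whose eigenvalues are those of `Δ^σ = I - D^{-1} A^σ`. -/
def nlapSym (w sgn : Fin N → Fin N → ℝ) : Matrix (Fin N) (Fin N) ℝ :=
  Matrix.of fun u v =>
    (if u = v then (1 : ℝ) else 0) -
      sgn u v * w u v / (Real.sqrt (deg w u) * Real.sqrt (deg w v))

/-- The signed (Kirchhoff) Laplacian `L^σ = D - A^σ`. -/
def lap (w sgn : Fin N → Fin N → ℝ) : Matrix (Fin N) (Fin N) ℝ :=
  Matrix.diagonal (deg w) - adj w sgn

/-- The nondecreasing enumeration of the eigenvalues (with multiplicity) of a real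
symmetric matrix; junk value `0` if the matrix is not symmetric.  `evals M ⟨k-1,_⟩`
is the `k`-th smallest eigenvalue `λ_k(M)`. -/
def evals (M : Matrix (Fin N) (Fin N) ℝ) : Fin N → ℝ :=
  if h : M.IsHermitian then (fun i => h.eigenvalues (Tuple.sort h.eigenvalues i)) else 0

/-- `|E(S,T)| = Σ_{u∈S, v∈T} w(u,v)`. -/
def EE (w : Fin N → Fin N → ℝ) (S T : Finset (Fin N)) : ℝ := ∑ u ∈ S, ∑ v ∈ T, w u v

/-- `|E⁺(S,T)|`: total weight of positive edges from `S` to `T`. -/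
def Epos (w sgn : Fin N → Fin N → ℝ) (S T : Finset (Fin N)) : ℝ :=
  ∑ u ∈ S, ∑ v ∈ T, if sgn u v = 1 then w u v else 0

/-- `|E⁻(S,T)|`: total weight of negative edges from `S` to `T`. -/
def Eneg (w sgn : Fin N → Fin N → ℝ) (S T : Finset (Fin N)) : ℝ :=
  ∑ u ∈ S, ∑ v ∈ T, if sgn u v = -1 then w u v else 0

/-- `vol_μ(S) = Σ_{u∈S} μ(u)`. -/
def vol (μ : Fin N → ℝ) (S : Finset (Fin N)) : ℝ := ∑ u ∈ S, μ u

/-- The signed bipartiteness ratio `β^σ(V₁,V₂)`. -/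
def betaR (w sgn : Fin N → Fin N → ℝ) (μ : Fin N → ℝ) (V1 V2 : Finset (Fin N)) : ℝ :=
  (2 * Epos w sgn V1 V2 + Eneg w sgn V1 V1 + Eneg w sgn V2 V2 +
      EE w (V1 ∪ V2) (V1 ∪ V2)ᶜ) / vol μ (V1 ∪ V2)

/-- The signed Cheeger constant `h₁^σ(μ)`: the minimum of `β^σ(V₁,V₂)` over all pairs of
disjoint subsets with nonempty union. -/
def h1 (w sgn : Fin N → Fin N → ℝ) (μ : Fin N → ℝ) : ℝ :=
  sInf {x | ∃ V1 V2 : Finset (Fin N),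
    Disjoint V1 V2 ∧ (V1 ∪ V2).Nonempty ∧ x = betaR w sgn μ V1 V2}

open Matrix MeasureTheory

theorem _root_.Matrix.IsHermitian.mul_dotProduct_self_le_dotProduct_mulVec {n : Type*}
    [Fintype n] [DecidableEq n] {A : Matrix n n ℝ} (hA : A.IsHermitian) {c : ℝ}
    (hc : ∀ i, c ≤ hA.eigenvalues i) (x : n → ℝ) : c * (x ⬝ᵥ x) ≤ x ⬝ᵥ (A *ᵥ x) := by
  have hpsd : (A - algebraMap ℝ _ c).PosSemidef := by
    rw [posSemidef_iff_isHermitian_and_spectrum_nonneg, ← spectrum.sub_singleton_eq,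
      hA.spectrum_real_eq_range_eigenvalues]
    refine ⟨hA.sub (isHermitian_diagonal _), ?_⟩
    rintro _ ⟨_, ⟨i, rfl⟩, _, rfl, rfl⟩
    simpa using hc i
  simpa [sub_mulVec, Algebra.algebraMap_eq_smul_one, smul_mulVec, dotProduct_smul]
    using hpsd.dotProduct_mulVec_nonneg x

theorem evals_zero_le_eigenvalues (hN : 0 < N) {M : Matrix (Fin N) (Fin N) ℝ}
    (hM : M.IsHermitian) (i : Fin N) : evals M ⟨0, hN⟩ ≤ hM.eigenvalues i := by
  rw [evals, dif_pos hM]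
  obtain ⟨j, rfl⟩ := (Tuple.sort hM.eigenvalues).surjective i
  exact Tuple.monotone_sort hM.eigenvalues (Nat.zero_le j.val)

theorem exists_mulVec_eq_evals_zero_smul (hN : 0 < N) {M : Matrix (Fin N) (Fin N) ℝ}
    (hM : M.IsHermitian) : ∃ x ≠ 0, M *ᵥ x = evals M ⟨0, hN⟩ • x := by
  refine ⟨hM.eigenvectorBasis (Tuple.sort hM.eigenvalues ⟨0, hN⟩), ?_, ?_⟩
  · simpa using hM.eigenvectorBasis.orthonormal.ne_zero _
  · rw [evals, dif_pos hM]
    exact hM.mulVec_eigenvectorBasis _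

theorem sum_sum_mul_le_sqrt_mul_sqrt {ι : Type*} [Fintype ι] {w : ι → ι → ℝ}
    (hw : ∀ u v, 0 ≤ w u v) (a b : ι → ι → ℝ) :
    ∑ u, ∑ v, w u v * (a u v * b u v) ≤
      √(∑ u, ∑ v, w u v * a u v ^ 2) * √(∑ u, ∑ v, w u v * b u v ^ 2) := by
  have hmul : ∀ u v, √(w u v) * a u v * (√(w u v) * b u v) = w u v * (a u v * b u v) :=
    fun u v => by rw [mul_mul_mul_comm, Real.mul_self_sqrt (hw u v)]
  simpa only [Fintype.sum_prod_type, mul_pow, Real.sq_sqrt (hw _ _), hmul] using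
    Real.sum_mul_le_sqrt_mul_sqrt univ (fun p : ι × ι => √(w p.1 p.2) * a p.1 p.2)
      (fun p => √(w p.1 p.2) * b p.1 p.2)

theorem sum_sum_mem_eq_sum_sum_ite {α M : Type*} [Fintype α] [DecidableEq α] [AddCommMonoid M]
    (S T : Finset α) (F : α → α → M) :
    ∑ u ∈ S, ∑ v ∈ T, F u v = ∑ u, ∑ v, if u ∈ S ∧ v ∈ T then F u v else 0 := by
  simp [ite_and]

theorem abs_mul_abs_sub_mul_abs_le (a b : ℝ) :
    |a * |a| - (b * |b|)| ≤ |a - b| * (|a| + |b|) := by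
  rw [abs_le]
  constructor <;> rcases abs_cases a with ⟨ha, ha'⟩ | ⟨ha, ha'⟩ <;>
    rcases abs_cases b with ⟨hb, hb'⟩ | ⟨hb, hb'⟩ <;>
    rcases abs_cases (a - b) with ⟨hab, hab'⟩ | ⟨hab, hab'⟩ <;>
    rw [ha, hb, hab] <;> nlinarith

/-- `sweep (g u) t` is the `u`-entry of `1_{V₁} - 1_{V₂}` for the threshold cut `V₁ = {t ≤ g}`,
`V₂ = {t ≤ -g}`. -/
def sweep (a t : ℝ) : ℝ := (Set.Iic a).indicator 1 t - (Set.Iic (-a)).indicator 1 t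

@[simp]
theorem sweep_zero (t : ℝ) : sweep 0 t = 0 := by
  simp [sweep]

theorem sweep_neg (a t : ℝ) : sweep (-a) t = -sweep a t := by
  simp [sweep]

theorem sweep_mono (t : ℝ) : Monotone (sweep · t) := by
  intro a b hab
  simp only [sweep, Set.indicator_apply, Set.mem_Iic, Pi.one_apply]
  split_ifs <;> linarith

theorem integrableOn_indicator_Iic (c M : ℝ) :
    IntegrableOn ((Set.Iic c).indicator (1 : ℝ → ℝ)) (Set.Ioc 0 M) :=
  (integrableOn_const measure_Ioc_lt_top.ne).indicator measurableSet_Iic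

theorem setIntegral_Ioc_indicator_Iic {c M : ℝ} (hc : c ≤ M) :
    ∫ t in Set.Ioc 0 M, (Set.Iic c).indicator (1 : ℝ → ℝ) t = max c 0 := by
  have hset : Set.Iic c ∩ Set.Ioc 0 M = Set.Ioc 0 c := by
    ext t
    simp only [Set.mem_inter_iff, Set.mem_Iic, Set.mem_Ioc]
    exact ⟨fun ⟨h1, h2, _⟩ => ⟨h2, h1⟩, fun ⟨h1, h2⟩ => ⟨h2, h1, h2.trans hc⟩⟩
  rw [integral_indicator measurableSet_Iic, Pi.one_def, setIntegral_const,
    measureReal_restrict_apply measurableSet_Iic, hset, Real.volume_real_Ioc]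
  simp

theorem integrableOn_sweep (a M : ℝ) : IntegrableOn (sweep a) (Set.Ioc 0 M) :=
  (integrableOn_indicator_Iic a M).sub (integrableOn_indicator_Iic (-a) M)

theorem setIntegral_sweep {a M : ℝ} (ha : |a| ≤ M) : ∫ t in Set.Ioc 0 M, sweep a t = a := by
  simp only [sweep]
  rw [integral_sub (integrableOn_indicator_Iic a M) (integrableOn_indicator_Iic (-a) M),
    setIntegral_Ioc_indicator_Iic (le_of_abs_le ha),
    setIntegral_Ioc_indicator_Iic ((neg_le_abs a).trans ha)]
  simp

theorem setIntegral_abs_sweep_sub {a b M : ℝ} (ha : |a| ≤ M) (hb : |b| ≤ M) :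
    ∫ t in Set.Ioc 0 M, |sweep a t - sweep b t| = |a - b| := by
  wlog hab : b ≤ a generalizing a b
  · simpa only [abs_sub_comm] using this hb ha (le_of_not_ge hab)
  have hmono : ∀ t, |sweep a t - sweep b t| = sweep a t - sweep b t := fun t =>
    abs_of_nonneg (sub_nonneg.2 (sweep_mono t hab))
  simp_rw [hmono]
  rw [integral_sub (integrableOn_sweep a M) (integrableOn_sweep b M), setIntegral_sweep ha,
    setIntegral_sweep hb, abs_of_nonneg (sub_nonneg.2 hab)]

variable {w sgn : Fin N → Fin N → ℝ}

theorem abs_sgn_mul (hG : IsWSG w sgn) (u v : Fin N) (a : ℝ) : |sgn u v * a| = |a| := by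
  rcases hG.sgn_pm u v with hs | hs <;> simp [hs]

def l1Energy (w sgn : Fin N → Fin N → ℝ) (g : Fin N → ℝ) : ℝ :=
  ∑ u, ∑ v, w u v * |g u - sgn u v * g v|

def cutVec (V1 V2 : Finset (Fin N)) (u : Fin N) : ℝ :=
  (if u ∈ V1 then 1 else 0) - (if u ∈ V2 then 1 else 0)

theorem l1Energy_nonneg (hG : IsWSG w sgn) (g : Fin N → ℝ) : 0 ≤ l1Energy w sgn g :=
  Finset.sum_nonneg fun u _ => Finset.sum_nonneg fun v _ =>
    mul_nonneg (hG.w_nonneg u v) (abs_nonneg _)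

theorem Epos_comm (hG : IsWSG w sgn) (S T : Finset (Fin N)) :
    Epos w sgn S T = Epos w sgn T S := by
  rw [Epos, Epos, Finset.sum_comm]
  simp only [hG.w_symm, hG.sgn_symm]

theorem EE_comm (hG : IsWSG w sgn) (S T : Finset (Fin N)) : EE w S T = EE w T S := by
  rw [EE, EE, Finset.sum_comm]
  simp only [hG.w_symm]

theorem betaR_numerator_eq (hG : IsWSG w sgn) {V1 V2 : Finset (Fin N)} (h : Disjoint V1 V2) :
    2 * Epos w sgn V1 V2 + Eneg w sgn V1 V1 + Eneg w sgn V2 V2 + EE w (V1 ∪ V2) (V1 ∪ V2)ᶜ =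
      l1Energy w sgn (cutVec V1 V2) / 2 := by
  have hmem : ∀ u, u ∈ V1 ∧ u ∉ V2 ∨ u ∉ V1 ∧ u ∈ V2 ∨ u ∉ V1 ∧ u ∉ V2 := fun u => by
    by_cases h1 : u ∈ V1
    · exact Or.inl ⟨h1, Finset.disjoint_left.1 h h1⟩
    · tauto
  have hEpos : 2 * Epos w sgn V1 V2 = Epos w sgn V1 V2 + Epos w sgn V2 V1 := by
    rw [Epos_comm hG V2 V1, two_mul]
  have hEE : EE w (V1 ∪ V2) (V1 ∪ V2)ᶜ =
      EE w (V1 ∪ V2) (V1 ∪ V2)ᶜ / 2 + EE w (V1 ∪ V2)ᶜ (V1 ∪ V2) / 2 := by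
    rw [EE_comm hG (V1 ∪ V2)ᶜ, add_halves]
  rw [hEpos, hEE, Epos, Epos, Eneg, Eneg, EE, EE, sum_sum_mem_eq_sum_sum_ite V1,
    sum_sum_mem_eq_sum_sum_ite V2, sum_sum_mem_eq_sum_sum_ite V1, sum_sum_mem_eq_sum_sum_ite V2,
    sum_sum_mem_eq_sum_sum_ite (V1 ∪ V2), sum_sum_mem_eq_sum_sum_ite (V1 ∪ V2)ᶜ]
  simp only [l1Energy, Finset.sum_div, ← Finset.sum_add_distrib]
  refine Finset.sum_congr rfl fun u _ => Finset.sum_congr rfl fun v _ => ?_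
  rcases hmem u with ⟨hu1, hu2⟩ | ⟨hu1, hu2⟩ | ⟨hu1, hu2⟩ <;>
  rcases hmem v with ⟨hv1, hv2⟩ | ⟨hv1, hv2⟩ | ⟨hv1, hv2⟩ <;>
  rcases hG.sgn_pm u v with hs | hs <;>
  norm_num [cutVec, hu1, hu2, hv1, hv2, hs]

theorem abs_cutVec {V1 V2 : Finset (Fin N)} (h : Disjoint V1 V2) (u : Fin N) :
    |cutVec V1 V2 u| = if u ∈ V1 ∪ V2 then 1 else 0 := by
  by_cases h1 : u ∈ V1
  · simp [cutVec, h1, Finset.disjoint_left.1 h h1]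
  · by_cases h2 : u ∈ V2 <;> simp [cutVec, h1, h2]

theorem vol_union_eq (μ : Fin N → ℝ) {V1 V2 : Finset (Fin N)} (h : Disjoint V1 V2) :
    vol μ (V1 ∪ V2) = ∑ u, μ u * |cutVec V1 V2 u| := by
  simp only [vol, abs_cutVec h, mul_ite, mul_one, mul_zero]
  rw [Finset.sum_ite_mem, Finset.univ_inter]

theorem betaR_eq (hG : IsWSG w sgn) (μ : Fin N → ℝ) {V1 V2 : Finset (Fin N)}
    (h : Disjoint V1 V2) :
    betaR w sgn μ V1 V2 =
      l1Energy w sgn (cutVec V1 V2) / 2 / ∑ u, μ u * |cutVec V1 V2 u| := by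
  rw [betaR, betaR_numerator_eq hG h, vol_union_eq μ h]

theorem betaR_nonneg (hG : IsWSG w sgn) {μ : Fin N → ℝ} (hμ : ∀ u, 0 ≤ μ u)
    {V1 V2 : Finset (Fin N)} (h : Disjoint V1 V2) : 0 ≤ betaR w sgn μ V1 V2 := by
  rw [betaR_eq hG μ h]
  exact div_nonneg (div_nonneg (l1Energy_nonneg hG _) zero_le_two)
    (Finset.sum_nonneg fun u _ => mul_nonneg (hμ u) (abs_nonneg _))

theorem h1_le_betaR (hG : IsWSG w sgn) {μ : Fin N → ℝ} (hμ : ∀ u, 0 ≤ μ u)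
    {V1 V2 : Finset (Fin N)} (h : Disjoint V1 V2) (hne : (V1 ∪ V2).Nonempty) :
    h1 w sgn μ ≤ betaR w sgn μ V1 V2 :=
  csInf_le ⟨0, by rintro _ ⟨V1, V2, h, -, rfl⟩; exact betaR_nonneg hG hμ h⟩ ⟨V1, V2, h, hne, rfl⟩

theorem le_h1 (hN : 0 < N) {μ : Fin N → ℝ} {c : ℝ}
    (hc : ∀ V1 V2 : Finset (Fin N), Disjoint V1 V2 → (V1 ∪ V2).Nonempty →
      c ≤ betaR w sgn μ V1 V2) :
    c ≤ h1 w sgn μ :=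
  le_csInf ⟨_, univ, ∅, disjoint_empty_right _, ⟨⟨0, hN⟩, by simp⟩, rfl⟩
    (by rintro _ ⟨V1, V2, h, hne, rfl⟩; exact hc V1 V2 h hne)

def energy (w sgn : Fin N → Fin N → ℝ) (f : Fin N → ℝ) : ℝ :=
  ∑ u, ∑ v, w u v * (f u - sgn u v * f v) ^ 2

theorem sum_sum_mul_sq_left (f : Fin N → ℝ) :
    ∑ u, ∑ v, w u v * f u ^ 2 = ∑ u, deg w u * f u ^ 2 := by
  simp only [deg, Finset.sum_mul]

theorem sum_sum_mul_sq_right (hG : IsWSG w sgn) (f : Fin N → ℝ) :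
    ∑ u, ∑ v, w u v * f v ^ 2 = ∑ u, deg w u * f u ^ 2 := by
  rw [Finset.sum_comm, ← sum_sum_mul_sq_left]
  simp only [hG.w_symm]

theorem energy_eq (hG : IsWSG w sgn) (f : Fin N → ℝ) :
    energy w sgn f =
      2 * (∑ u, deg w u * f u ^ 2 - ∑ u, ∑ v, sgn u v * w u v * (f u * f v)) := by
  have hterm : ∀ u v, w u v * (f u - sgn u v * f v) ^ 2 =
      w u v * f u ^ 2 + w u v * f v ^ 2 - 2 * (sgn u v * w u v * (f u * f v)) := fun u v => by
    rcases hG.sgn_pm u v with hs | hs <;> rw [hs] <;> ring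
  simp only [energy, hterm, Finset.sum_add_distrib, Finset.sum_sub_distrib, ← Finset.mul_sum,
    sum_sum_mul_sq_left, sum_sum_mul_sq_right hG]
  ring

theorem nlapSym_isHermitian (hG : IsWSG w sgn) : (nlapSym w sgn).IsHermitian := by
  ext u v
  simp only [nlapSym, conjTranspose_apply, of_apply, star_trivial, hG.w_symm v u,
    hG.sgn_symm v u, eq_comm (a := v), mul_comm (√(deg w v))]

theorem dotProduct_sqrt_deg_self (hd : ∀ u, 0 < deg w u) (f : Fin N → ℝ) :
    (fun u => √(deg w u) * f u) ⬝ᵥ (fun u => √(deg w u) * f u) = ∑ u, deg w u * f u ^ 2 := by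
  simp only [dotProduct]
  refine Finset.sum_congr rfl fun u _ => ?_
  rw [mul_mul_mul_comm, Real.mul_self_sqrt (hd u).le, sq]

theorem dotProduct_nlapSym_mulVec (hG : IsWSG w sgn) (hd : ∀ u, 0 < deg w u)
    (f : Fin N → ℝ) :
    (fun u => √(deg w u) * f u) ⬝ᵥ (nlapSym w sgn *ᵥ fun u => √(deg w u) * f u) =
      energy w sgn f / 2 := by
  have hterm : ∀ u v, √(deg w u) * f u * (nlapSym w sgn u v * (√(deg w v) * f v)) =
      (if u = v then deg w u * f u ^ 2 else 0) - sgn u v * w u v * (f u * f v) := fun u v => by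
    simp only [nlapSym, of_apply]
    split_ifs with huv
    · subst huv
      rw [hG.w_loopless]
      linear_combination f u ^ 2 * Real.mul_self_sqrt (hd u).le
    · have := (Real.sqrt_pos.2 (hd u)).ne'
      have := (Real.sqrt_pos.2 (hd v)).ne'
      field_simp
      ring
  simp only [dotProduct, mulVec, Finset.mul_sum, hterm, Finset.sum_sub_distrib, Finset.sum_ite_eq,
    Finset.mem_univ, if_true, energy_eq hG]
  ring

theorem two_mul_evals_mul_le_energy (hN : 0 < N) (hG : IsWSG w sgn) (hd : ∀ u, 0 < deg w u)
    (f : Fin N → ℝ) :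
    2 * evals (nlapSym w sgn) ⟨0, hN⟩ * ∑ u, deg w u * f u ^ 2 ≤ energy w sgn f := by
  have hM := nlapSym_isHermitian hG
  have h := hM.mul_dotProduct_self_le_dotProduct_mulVec (evals_zero_le_eigenvalues hN hM)
    (fun u => √(deg w u) * f u)
  rw [dotProduct_sqrt_deg_self hd, dotProduct_nlapSym_mulVec hG hd] at h
  linarith

theorem exists_energy_eq_two_mul_evals (hN : 0 < N) (hG : IsWSG w sgn)
    (hd : ∀ u, 0 < deg w u) :
    ∃ f ≠ 0, energy w sgn f = 2 * evals (nlapSym w sgn) ⟨0, hN⟩ * ∑ u, deg w u * f u ^ 2 := by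
  obtain ⟨x, hx0, hx⟩ := exists_mulVec_eq_evals_zero_smul hN (nlapSym_isHermitian hG)
  have hxf : (fun u => √(deg w u) * (x u / √(deg w u))) = x :=
    funext fun u => mul_div_cancel₀ _ (Real.sqrt_pos.2 (hd u)).ne'
  refine ⟨fun u => x u / √(deg w u), fun hf => hx0 ?_, ?_⟩
  · rw [← hxf]
    funext u
    simp [congrFun hf u]
  · have h := dotProduct_nlapSym_mulVec hG hd fun u => x u / √(deg w u)
    rw [← dotProduct_sqrt_deg_self hd, hxf]
    rw [hxf, hx, dotProduct_smul, smul_eq_mul] at h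
    linarith

theorem evals_div_two_le_betaR (hN : 0 < N) (hG : IsWSG w sgn) (hd : ∀ u, 0 < deg w u)
    {V1 V2 : Finset (Fin N)} (h : Disjoint V1 V2) (hne : (V1 ∪ V2).Nonempty) :
    evals (nlapSym w sgn) ⟨0, hN⟩ / 2 ≤ betaR w sgn (deg w) V1 V2 := by
  set x := cutVec V1 V2
  have hx : ∀ u, |x u| ≤ 1 := fun u => by rw [abs_cutVec h]; split_ifs <;> norm_num
  have hsq : ∀ u, x u ^ 2 = |x u| := fun u => by
    rw [← sq_abs, abs_cutVec h]; split_ifs <;> norm_num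
  have hvol : 0 < ∑ u, deg w u * |x u| := by
    rw [← vol_union_eq _ h]
    exact Finset.sum_pos (fun u _ => hd u) hne
  have hE : energy w sgn x ≤ 2 * l1Energy w sgn x := by
    simp only [energy, l1Energy, Finset.mul_sum]
    refine Finset.sum_le_sum fun u _ => Finset.sum_le_sum fun v _ => ?_
    set a := x u - sgn u v * x v
    have ha : |a| ≤ 2 := by
      linarith [abs_sub (x u) (sgn u v * x v), abs_sgn_mul hG u v (x v), hx u, hx v]
    calc w u v * a ^ 2 = w u v * |a| * |a| := by rw [← sq_abs]; ring
      _ ≤ w u v * |a| * 2 := by gcongr; exact mul_nonneg (hG.w_nonneg u v) (abs_nonneg a)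
      _ = 2 * (w u v * |a|) := by ring
  have hR := two_mul_evals_mul_le_energy hN hG hd x
  simp only [hsq] at hR
  rw [betaR_eq hG _ h, le_div_iff₀ hvol]
  linarith

theorem sgn_mul_sweep (hG : IsWSG w sgn) (u v : Fin N) (a t : ℝ) :
    sgn u v * sweep a t = sweep (sgn u v * a) t := by
  rcases hG.sgn_pm u v with hs | hs <;> simp [hs, sweep_neg]

theorem integrableOn_l1Energy_sweep (g : Fin N → ℝ) (M : ℝ) :
    IntegrableOn (fun t => l1Energy w sgn fun u => sweep (g u) t) (Set.Ioc 0 M) :=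
  integrable_finsetSum _ fun u _ => integrable_finsetSum _ fun v _ =>
    ((integrableOn_sweep (g u) M).sub ((integrableOn_sweep (g v) M).const_mul _)).abs.const_mul _

theorem setIntegral_l1Energy_sweep (hG : IsWSG w sgn) {g : Fin N → ℝ} {M : ℝ}
    (hg : ∀ u, |g u| ≤ M) :
    ∫ t in Set.Ioc 0 M, l1Energy w sgn (fun u => sweep (g u) t) = l1Energy w sgn g := by
  have hint : ∀ a b, IntegrableOn (fun t => |sweep a t - sweep b t|) (Set.Ioc 0 M) := fun a b =>
    ((integrableOn_sweep a M).sub (integrableOn_sweep b M)).abs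
  simp only [l1Energy, sgn_mul_sweep hG]
  rw [integral_finsetSum _ fun u _ => integrable_finsetSum _ fun v _ => (hint _ _).const_mul _]
  refine Finset.sum_congr rfl fun u _ => ?_
  rw [integral_finsetSum _ fun v _ => (hint _ _).const_mul _]
  refine Finset.sum_congr rfl fun v _ => ?_
  rw [integral_const_mul, setIntegral_abs_sweep_sub (hg u) (by rw [abs_sgn_mul hG]; exact hg v)]

theorem integrableOn_sum_mul_abs_sweep (μ g : Fin N → ℝ) (M : ℝ) :
    IntegrableOn (fun t => ∑ u, μ u * |sweep (g u) t|) (Set.Ioc 0 M) :=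
  integrable_finsetSum _ fun u _ => ((integrableOn_sweep (g u) M).abs).const_mul (μ u)

theorem setIntegral_sum_mul_abs_sweep (μ : Fin N → ℝ) {g : Fin N → ℝ} {M : ℝ}
    (hg : ∀ u, |g u| ≤ M) :
    ∫ t in Set.Ioc 0 M, ∑ u, μ u * |sweep (g u) t| = ∑ u, μ u * |g u| := by
  rw [integral_finsetSum _ fun u _ => ((integrableOn_sweep (g u) M).abs).const_mul (μ u)]
  refine Finset.sum_congr rfl fun u _ => ?_
  have h0 : |(0 : ℝ)| ≤ M := by simpa using (abs_nonneg _).trans (hg u)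
  rw [integral_const_mul]
  simpa using congrArg (μ u * ·) (setIntegral_abs_sweep_sub (hg u) h0)

theorem cutVec_filter_le (g : Fin N → ℝ) (t : ℝ) :
    cutVec (univ.filter fun u => t ≤ g u) (univ.filter fun u => t ≤ -g u) =
      fun u => sweep (g u) t := by
  ext u
  simp [cutVec, sweep, Set.indicator_apply]

theorem disjoint_filter_le {g : Fin N → ℝ} {t : ℝ} (ht : 0 < t) :
    Disjoint (univ.filter fun u => t ≤ g u) (univ.filter fun u => t ≤ -g u) := by
  simp only [Finset.disjoint_left, Finset.mem_filter, Finset.mem_univ, true_and]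
  intro u h1 h2
  linarith

theorem exists_betaR_le_l1Energy_div (hG : IsWSG w sgn) {μ : Fin N → ℝ} (hμ : ∀ u, 0 < μ u)
    {g : Fin N → ℝ} (hg : g ≠ 0) :
    ∃ V1 V2 : Finset (Fin N), Disjoint V1 V2 ∧ (V1 ∪ V2).Nonempty ∧
      betaR w sgn μ V1 V2 ≤ l1Energy w sgn g / 2 / ∑ u, μ u * |g u| := by
  obtain ⟨u0, hu0⟩ := Function.ne_iff.1 hg
  obtain ⟨m, -, hm⟩ := Finset.exists_max_image univ (fun u => |g u|) ⟨u0, mem_univ _⟩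
  set M := |g m|
  have hgM : ∀ u, |g u| ≤ M := fun u => hm u (mem_univ u)
  have hM : 0 < M := (abs_pos.2 hu0).trans_le (hgM u0)
  have hB : 0 < ∑ u, μ u * |g u| :=
    Finset.sum_pos' (fun u _ => mul_nonneg (hμ u).le (abs_nonneg _))
      ⟨u0, mem_univ _, mul_pos (hμ u0) (abs_pos.2 hu0)⟩
  set κ := l1Energy w sgn g / 2 / ∑ u, μ u * |g u|
  set F := fun t => l1Energy w sgn (fun u => sweep (g u) t) / 2 - κ * ∑ u, μ u * |sweep (g u) t|
  have hF : IntegrableOn F (Set.Ioc 0 M) :=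
    ((integrableOn_l1Energy_sweep g M).div_const 2).sub
      ((integrableOn_sum_mul_abs_sweep μ g M).const_mul κ)
  have hFint : ∫ t in Set.Ioc 0 M, F t = 0 := by
    rw [integral_sub ((integrableOn_l1Energy_sweep g M).div_const 2)
      ((integrableOn_sum_mul_abs_sweep μ g M).const_mul κ), integral_div, integral_const_mul,
      setIntegral_l1Energy_sweep hG hgM, setIntegral_sum_mul_abs_sweep μ hgM,
      div_mul_cancel₀ _ hB.ne', sub_self]
  obtain ⟨t, ht, hFt⟩ := exists_le_setAverage (μ := volume) (by simp [hM]) (by simp) hF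
  rw [setAverage_eq, hFint, smul_zero] at hFt
  have hmt : m ∈ (univ.filter fun u => t ≤ g u) ∪ (univ.filter fun u => t ≤ -g u) := by
    simpa [← le_abs] using ht.2
  have hvol := vol_union_eq μ (disjoint_filter_le (g := g) ht.1)
  rw [cutVec_filter_le] at hvol
  have hvol_pos : 0 < ∑ u, μ u * |sweep (g u) t| :=
    hvol ▸ Finset.sum_pos (fun u _ => hμ u) ⟨m, hmt⟩
  refine ⟨_, _, disjoint_filter_le ht.1, ⟨m, hmt⟩, ?_⟩
  rw [betaR_eq hG μ (disjoint_filter_le ht.1), cutVec_filter_le, div_le_iff₀ hvol_pos]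
  exact sub_nonpos.1 hFt

theorem l1Energy_mul_abs_le (hG : IsWSG w sgn) (f : Fin N → ℝ) :
    l1Energy w sgn (fun u => f u * |f u|) ≤
      √(energy w sgn f) * (2 * √(∑ u, deg w u * f u ^ 2)) := by
  have hpair : ∀ u v, |f u * |f u| - sgn u v * (f v * |f v|)| ≤
      |f u - sgn u v * f v| * (|f u| + |f v|) := fun u v => by
    have h := abs_mul_abs_sub_mul_abs_le (f u) (sgn u v * f v)
    rwa [abs_sgn_mul hG, mul_assoc] at h
  have hsq : ∀ u v, (|f u| + |f v|) ^ 2 ≤ 2 * f u ^ 2 + 2 * f v ^ 2 := fun u v => by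
    nlinarith [sq_nonneg (|f u| - |f v|), sq_abs (f u), sq_abs (f v)]
  calc l1Energy w sgn (fun u => f u * |f u|)
      ≤ ∑ u, ∑ v, w u v * (|f u - sgn u v * f v| * (|f u| + |f v|)) := by
        simp only [l1Energy]
        gcongr with u _ v _
        exacts [hG.w_nonneg u v, hpair u v]
    _ ≤ √(energy w sgn f) * √(∑ u, ∑ v, w u v * (|f u| + |f v|) ^ 2) := by
        simpa only [sq_abs, energy] using sum_sum_mul_le_sqrt_mul_sqrt hG.w_nonneg
          (fun u v => |f u - sgn u v * f v|) (fun u v => |f u| + |f v|)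
    _ ≤ √(energy w sgn f) * √(2 ^ 2 * ∑ u, deg w u * f u ^ 2) := by
        gcongr
        calc ∑ u, ∑ v, w u v * (|f u| + |f v|) ^ 2
            ≤ ∑ u, ∑ v, w u v * (2 * f u ^ 2 + 2 * f v ^ 2) := by
              gcongr with u _ v _
              exacts [hG.w_nonneg u v, hsq u v]
          _ = 2 ^ 2 * ∑ u, deg w u * f u ^ 2 := by
              simp only [mul_add, Finset.sum_add_distrib, mul_left_comm (w _ _) 2,
                ← Finset.mul_sum, sum_sum_mul_sq_left, sum_sum_mul_sq_right hG]
              ring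
    _ = √(energy w sgn f) * (2 * √(∑ u, deg w u * f u ^ 2)) := by
        rw [Real.sqrt_mul (by norm_num), Real.sqrt_sq zero_le_two]

theorem exists_betaR_le_sqrt (hG : IsWSG w sgn) (hd : ∀ u, 0 < deg w u) {f : Fin N → ℝ}
    (hf : f ≠ 0) {c : ℝ} (hE : energy w sgn f ≤ c * ∑ u, deg w u * f u ^ 2) :
    ∃ V1 V2 : Finset (Fin N), Disjoint V1 V2 ∧ (V1 ∪ V2).Nonempty ∧
      betaR w sgn (deg w) V1 V2 ≤ √c := by
  obtain ⟨u0, hu0⟩ := Function.ne_iff.1 hf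
  have hg : (fun u => f u * |f u|) ≠ 0 :=
    Function.ne_iff.2 ⟨u0, mul_ne_zero hu0 (abs_ne_zero.2 hu0)⟩
  obtain ⟨V1, V2, h, hne, hβ⟩ := exists_betaR_le_l1Energy_div hG hd hg
  refine ⟨V1, V2, h, hne, hβ.trans ?_⟩
  set T := ∑ u, deg w u * f u ^ 2
  have hT : 0 < T := Finset.sum_pos' (fun u _ => mul_nonneg (hd u).le (sq_nonneg _))
    ⟨u0, mem_univ _, mul_pos (hd u0) (pow_pos (abs_pos.2 hu0) 2 |>.trans_eq (sq_abs _))⟩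
  have habs : ∑ u, deg w u * |(f u * |f u|)| = T := by
    simp only [abs_mul, abs_abs, ← sq, sq_abs, T]
  rw [habs, div_div, div_le_iff₀ (by positivity)]
  calc l1Energy w sgn (fun u => f u * |f u|)
      ≤ √(energy w sgn f) * (2 * √T) := l1Energy_mul_abs_le hG f
    _ ≤ √(c * T) * (2 * √T) := by gcongr
    _ = √c * (2 * T) := by
        rw [Real.sqrt_mul' _ hT.le]
        linear_combination 2 * √c * Real.mul_self_sqrt hT.le

/-- **signed Cheeger inequality.**
`λ₁(Δ^σ)/2 ≤ h₁^σ(μ_d) ≤ √(2 λ₁(Δ^σ))`. -/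
theorem signed_cheeger_inequality {N : ℕ} (hN : 0 < N) (w sgn : Fin N → Fin N → ℝ)
    (hG : IsWSG w sgn) (hd : ∀ u, 0 < deg w u) :
    evals (nlapSym w sgn) ⟨0, hN⟩ / 2 ≤ h1 w sgn (deg w) ∧
    h1 w sgn (deg w) ≤ Real.sqrt (2 * evals (nlapSym w sgn) ⟨0, hN⟩) := by
  refine ⟨le_h1 hN fun V1 V2 h hne => evals_div_two_le_betaR hN hG hd h hne, ?_⟩
  obtain ⟨f, hf, hE⟩ := exists_energy_eq_two_mul_evals hN hG hd
  obtain ⟨V1, V2, h, hne, hβ⟩ := exists_betaR_le_sqrt hG hd hf hE.le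
  exact (h1_le_betaR hG (fun u => (hd u).le) h hne).trans hβ

end SignedGraph
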